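/- If G is a non-abelian T(2,n)-group or T(3,n)-group and N is a normal subgroup of G such that G/N is non-abelian, then |N| < n. -/

import Mathlib

/-!
If `xN` and `yN` do not commute in `G ⧸ N`, then neither do any two of `xN`, `yN`, `xyN`.
Translating a subset `T ⊆ N` of size `n` by `x`, `y` and `xy` gives three `n`-sets, and any two
elements taken from different translates are congruent modulo `N` to two of `x`, `y`, `xy`, so
they cannot commute. Hence a `T(3,n)`-group (in particular a `T(2,n)`-group) has no such `T`,
that is, `|N| < n`.
-/

/-- `G` is a `T(m,n)`-group: for every `m` subsets of `G` of cardinality `n`,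
there exist distinct indices `i ≠ j` and commuting elements `x ∈ Xᵢ`, `y ∈ Xⱼ`. -/
def IsTGroup (G : Type*) [Group G] (m n : ℕ) : Prop :=
  ∀ X : Fin m → Finset G, (∀ i, (X i).card = n) →
    ∃ i j, i ≠ j ∧ ∃ x ∈ X i, ∃ y ∈ X j, x * y = y * x

lemma Set.finite_and_ncard_lt_of_forall_finset_card_ne {α : Type*} {s : Set α} {n : ℕ}
    (h : ∀ t : Finset α, ↑t ⊆ s → t.card ≠ n) : s.Finite ∧ s.ncard < n := by
  rcases s.finite_or_infinite with hs | hs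
  · refine ⟨hs, lt_of_not_ge fun hn => ?_⟩
    obtain ⟨t, hts, htn⟩ :=
      Finset.exists_subset_card_eq (s := hs.toFinset) (n := n)
        (by rwa [← ncard_eq_toFinset_card s hs])
    exact h t (by simpa using hts) htn
  · obtain ⟨t, hts, htn⟩ := hs.exists_subset_card_eq n
    exact absurd htn (h t hts)

lemma pairwise_not_commute_mul {G : Type*} [Group G] {x y : G} (h : ¬Commute x y) :
    Pairwise fun i j => ¬Commute (![x, y, x * y] i) (![x, y, x * y] j) := by
  have hx : ¬Commute x (x * y) := fun h' =>
    h ((IsLeftRegular.all x).commute_mul_left_iff.1 h'.symm)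
  have hy : ¬Commute y (x * y) := fun h' =>
    h ((IsRightRegular.all y).commute_mul_right_iff.1 h'.symm).symm
  intro i j hij
  fin_cases i <;> fin_cases j <;> simp at hij ⊢ <;> first
    | assumption | exact fun h' => h h'.symm | exact fun h' => hx h'.symm | exact fun h' => hy h'.symm

namespace IsTGroup

variable {G : Type*} [Group G] {m n : ℕ}

lemma mono {m' : ℕ} (h : IsTGroup G m n) (hm : m ≤ m') : IsTGroup G m' n := fun X hX => by
  obtain ⟨i, j, hij, hx⟩ := h (X ∘ Fin.castLE hm) (fun i => hX _)
  exact ⟨_, _, (Fin.castLE_injective hm).ne hij, hx⟩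

lemma exists_commute_mk (h : IsTGroup G m n) (N : Subgroup G) [N.Normal] (u : Fin m → G)
    {T : Finset G} (hTN : ↑T ⊆ (N : Set G)) (hT : T.card = n) :
    ∃ i j, i ≠ j ∧ Commute (u i : G ⧸ N) (u j) := by
  classical
  obtain ⟨i, j, hij, _, ha, _, hb, hab⟩ := h (fun i => T.image (u i * ·)) fun i => by
    rw [Finset.card_image_of_injective _ (mul_right_injective _), hT]
  obtain ⟨a, haT, rfl⟩ := Finset.mem_image.1 ha
  obtain ⟨b, hbT, rfl⟩ := Finset.mem_image.1 hb
  refine ⟨i, j, hij, ?_⟩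
  have := Commute.map hab (QuotientGroup.mk' N)
  simpa only [QuotientGroup.mk'_apply, QuotientGroup.mk_mul_of_mem _ (hTN haT),
    QuotientGroup.mk_mul_of_mem _ (hTN hbT)] using this

lemma finite_and_card_lt (h : IsTGroup G m n) (N : Subgroup G) [N.Normal] (u : Fin m → G ⧸ N)
    (hu : Pairwise fun i j => ¬Commute (u i) (u j)) : Finite N ∧ Nat.card N < n := by
  have hN := Set.finite_and_ncard_lt_of_forall_finset_card_ne (s := (N : Set G)) fun T hTN hT => by
    obtain ⟨i, j, hij, hc⟩ := h.exists_commute_mk N (fun i => (u i).out) hTN hT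
    exact hu hij (by simpa only [QuotientGroup.out_eq'] using hc)
  exact ⟨hN.1.to_subtype, (Nat.card_coe_set_eq _).trans_lt hN.2⟩

end IsTGroup

theorem stmt_11_general (G : Type*) [Group G] (n : ℕ)
    (hT : IsTGroup G 2 n ∨ IsTGroup G 3 n)
    (N : Subgroup G) [N.Normal]
    (hQ : ∃ a b : G ⧸ N, a * b ≠ b * a) :
    Finite N ∧ Nat.card N < n := by
  obtain ⟨x, y, hxy⟩ := hQ
  have h3 : IsTGroup G 3 n := hT.elim (·.mono (by norm_num)) id
  exact h3.finite_and_card_lt N ![x, y, x * y] (pairwise_not_commute_mul hxy)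

theorem stmt_11 (G : Type*) [Group G] (n : ℕ) (hn : 1 ≤ n)
    (hT : IsTGroup G 2 n ∨ IsTGroup G 3 n)
    (hG : ∃ a b : G, a * b ≠ b * a)
    (N : Subgroup G) [N.Normal]
    (hQ : ∃ a b : G ⧸ N, a * b ≠ b * a) :
    Finite N ∧ Nat.card N < n :=
  stmt_11_general G n hT N hQ
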